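/- For a pointed space (X, x₀) and n ≥ 1, the group πₙ(X, x₀) with the whisker topology is discrete if and only if X is semilocally n-simply connected at x₀, i.e., there exists an open neighbourhood U of x₀ such that every n-loop in U based at x₀ is nullhomotopic in X. -/

import Mathlib

open scoped Topology unitInterval
open Topology.Homotopy

/-- The set of elements of the `n`-th homotopy group `HomotopyGroup N X x₀` that are represented
by a generalized loop whose image lies in `U`; this is exactly the image of the homomorphism
`πₙ(i) : πₙ(U, x₀) → πₙ(X, x₀)` induced by the inclusion `i : U → X`. -/
def whiskerNbhd (N : Type*) (X : Type*) [TopologicalSpace X] (x₀ : X) (U : Set X) :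
    Set (HomotopyGroup N X x₀) :=
  {p | ∃ f : Ω^ N X x₀, Set.range (⇑f) ⊆ U ∧ ⟦f⟧ = p}

/-- The whisker topology on the homotopy group `HomotopyGroup N X x₀`: the subgroup topology
generated by the cosets `[α] ⬝ πₙ(i)(πₙ(U, x₀))` for `U` an open neighbourhood of `x₀`. -/
def whiskerTopology (N : Type*) [DecidableEq N] [Nonempty N]
    (X : Type*) [TopologicalSpace X] (x₀ : X) :
    TopologicalSpace (HomotopyGroup N X x₀) :=
  TopologicalSpace.generateFrom
    {C | ∃ (p : HomotopyGroup N X x₀) (U : Set X), IsOpen U ∧ x₀ ∈ U ∧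
      C = (fun q => p * q) '' whiskerNbhd N X x₀ U}

/-!
A basic open set of the whisker topology around `q` is `q * πₙ(i)(πₙ(U))`, and these are closed
under products since the concatenation of two `n`-loops in `U` again lies in `U`. Hence a set is
open only if it contains such a coset around each of its points. If the topology is discrete, the
coset around `1` inside `{1}` gives a neighbourhood `U` with trivial image; conversely, a trivial
image `πₙ(i)(πₙ(U)) = {1}` makes every singleton `{q} = q * πₙ(i)(πₙ(U))` a basic open set.
-/

section

variable {N X : Type*} [TopologicalSpace X] {x₀ : X}

lemma range_transAt_subset [DecidableEq N] (i : N) (f g : Ω^ N X x₀) :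
    Set.range (GenLoop.transAt i f g) ⊆ Set.range f ∪ Set.range g := by
  rintro _ ⟨t, rfl⟩
  rw [GenLoop.transAt, GenLoop.coe_copy]
  split_ifs
  · exact Or.inl ⟨_, rfl⟩
  · exact Or.inr ⟨_, rfl⟩

lemma whiskerNbhd_mono {U V : Set X} (h : U ⊆ V) :
    whiskerNbhd N X x₀ U ⊆ whiskerNbhd N X x₀ V := by
  rintro _ ⟨f, hf, rfl⟩
  exact ⟨f, hf.trans h, rfl⟩

variable [DecidableEq N] [Nonempty N] {U : Set X}

lemma one_mem_whiskerNbhd (hU : x₀ ∈ U) : (1 : HomotopyGroup N X x₀) ∈ whiskerNbhd N X x₀ U :=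
  ⟨GenLoop.const, Set.range_subset_iff.2 fun _ => hU, HomotopyGroup.one_def.symm⟩

lemma mul_mem_whiskerNbhd {p q : HomotopyGroup N X x₀} (hp : p ∈ whiskerNbhd N X x₀ U)
    (hq : q ∈ whiskerNbhd N X x₀ U) : p * q ∈ whiskerNbhd N X x₀ U := by
  obtain ⟨f, hf, rfl⟩ := hp
  obtain ⟨g, hg, rfl⟩ := hq
  let i := Classical.arbitrary N
  exact ⟨GenLoop.transAt i g f, (range_transAt_subset i g f).trans (Set.union_subset hg hf),
    HomotopyGroup.mul_spec.symm⟩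

lemma exists_image_mul_left_whiskerNbhd_subset {s : Set (HomotopyGroup N X x₀)}
    (hs : IsOpen[whiskerTopology N X x₀] s) {q : HomotopyGroup N X x₀} (hq : q ∈ s) :
    ∃ U : Set X, IsOpen U ∧ x₀ ∈ U ∧ (q * ·) '' whiskerNbhd N X x₀ U ⊆ s := by
  induction hs with
  | basic t ht =>
    obtain ⟨p, U, hUo, hUx, rfl⟩ := ht
    obtain ⟨r, hr, rfl⟩ := hq
    refine ⟨U, hUo, hUx, ?_⟩
    rintro _ ⟨k, hk, rfl⟩
    exact ⟨r * k, mul_mem_whiskerNbhd hr hk, (mul_assoc p r k).symm⟩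
  | univ => exact ⟨Set.univ, isOpen_univ, trivial, Set.subset_univ _⟩
  | inter t₁ t₂ _ _ ih₁ ih₂ =>
    obtain ⟨U, hUo, hUx, hU⟩ := ih₁ hq.1
    obtain ⟨V, hVo, hVx, hV⟩ := ih₂ hq.2
    refine ⟨U ∩ V, hUo.inter hVo, ⟨hUx, hVx⟩, Set.subset_inter ?_ ?_⟩
    · exact (Set.image_mono (whiskerNbhd_mono Set.inter_subset_left)).trans hU
    · exact (Set.image_mono (whiskerNbhd_mono Set.inter_subset_right)).trans hV
  | sUnion S _ ih =>
    obtain ⟨t, htS, hqt⟩ := hq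
    obtain ⟨U, hUo, hUx, hU⟩ := ih t htS hqt
    exact ⟨U, hUo, hUx, hU.trans (Set.subset_sUnion_of_mem htS)⟩

lemma isOpen_singleton_of_whiskerNbhd_subset_one (hUo : IsOpen U) (hUx : x₀ ∈ U)
    (hU : whiskerNbhd N X x₀ U ⊆ {1}) (q : HomotopyGroup N X x₀) :
    IsOpen[whiskerTopology N X x₀] {q} := by
  have hNbhd : whiskerNbhd N X x₀ U = {1} :=
    Set.Subset.antisymm hU (Set.singleton_subset_iff.2 (one_mem_whiskerNbhd hUx))
  refine TopologicalSpace.GenerateOpen.basic _ ⟨q, U, hUo, hUx, ?_⟩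
  rw [hNbhd, Set.image_singleton, mul_one]

theorem whiskerTopology_eq_bot_iff :
    whiskerTopology N X x₀ = ⊥ ↔
      ∃ U : Set X, IsOpen U ∧ x₀ ∈ U ∧ whiskerNbhd N X x₀ U ⊆ {1} := by
  constructor
  · intro h
    have hone : IsOpen[whiskerTopology N X x₀] {(1 : HomotopyGroup N X x₀)} := by
      rw [h]; trivial
    obtain ⟨U, hUo, hUx, hU⟩ := exists_image_mul_left_whiskerNbhd_subset hone rfl
    refine ⟨U, hUo, hUx, fun p hp => ?_⟩
    simpa using hU ⟨p, hp, rfl⟩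
  · rintro ⟨U, hUo, hUx, hU⟩
    exact eq_bot_of_singletons_open (isOpen_singleton_of_whiskerNbhd_subset_one hUo hUx hU)

end

/-- For n ≥ 1, the whisker topology on the n-th homotopy group is discrete if and only if X is
semilocally n-simply connected at the base point: some open neighbourhood U of the base point
exists such that every n-loop in U based at the base point is nullhomotopic in X. -/
theorem whiskerTopology_discrete_iff (n : ℕ)
    (X : Type*) [TopologicalSpace X] (x₀ : X) :
    whiskerTopology (Fin (n + 1)) X x₀ = (⊥ : TopologicalSpace (HomotopyGroup (Fin (n + 1)) X x₀)) ↔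
      ∃ U : Set X, IsOpen U ∧ x₀ ∈ U ∧
        ∀ f : Ω^ (Fin (n + 1)) X x₀, Set.range (⇑f) ⊆ U →
          (⟦f⟧ : HomotopyGroup (Fin (n + 1)) X x₀) = (1 : HomotopyGroup (Fin (n + 1)) X x₀) := by
  rw [whiskerTopology_eq_bot_iff]
  refine exists_congr fun U => and_congr_right fun _ => and_congr_right fun _ => ?_
  constructor
  · exact fun hU f hf => hU ⟨f, hf, rfl⟩
  · rintro hU _ ⟨f, hf, rfl⟩
    exact hU f hf
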